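/- arXiv:2406.19983 — 2 statements merged into one kernel-verified Lean document; each statement's English description precedes it below -/
import Mathlib

section
/- For a SIMTP order-p Markov chain, the expectation over the conditioning prefix of the maximal conditional probability of the next n+1 symbols equals the global maximum of that conditional probability over both prefix and continuation: ⟨max_{x_t,...,x_{t+n}} P(x_t,...,x_{t+n} | x_{t-1},...,x_{t-p})⟩_{x_{t-1},...,x_{t-p}} = max_{x_{t-p},...,x_{t+n}} P(x_t,...,x_{t+n} | x_{t-1},...,x_{t-p}). -/
open Real

/-- Maximum of a real-valued function on a finite nonempty type. -/
noncomputable def fmax {α : Type*} [Fintype α] [Nonempty α] (f : α → ℝ) : ℝ :=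
  Finset.univ.sup' Finset.univ_nonempty f

/-- Conditional probability of a block of length `n+1` given a prefix of length
`p`, for an order-p Markov chain with one-step transition probabilities `T`,
obtained via the Markov factorization: the `i`-th factor is the transition
probability of `b i` given the `p` symbols preceding it (in chronological
order) in the concatenated sequence `pre ++ b`. -/
noncomputable def blockCond {S : Type*} (p n : ℕ)
    (T : (Fin p → S) → S → ℝ) (pre : Fin p → S) (b : Fin (n + 1) → S) : ℝ :=
  ∏ i : Fin (n + 1), T (fun j : Fin p =>
    Fin.append pre b ⟨i.1 + j.1, by have := i.isLt; have := j.isLt; omega⟩) (b i)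

lemma le_fmax {α : Type*} [Fintype α] [Nonempty α] (f : α → ℝ) (a : α) :
    f a ≤ fmax f := Finset.le_sup' f (Finset.mem_univ a)

lemma exists_fmax {α : Type*} [Fintype α] [Nonempty α] (f : α → ℝ) :
    ∃ a, fmax f = f a := by
  obtain ⟨a, -, ha⟩ := Finset.exists_mem_eq_sup' Finset.univ_nonempty f
  exact ⟨a, ha⟩

lemma fin_append_mk_left {S : Type*} {p m : ℕ} (pre : Fin p → S) (b : Fin m → S)
    (k : ℕ) (h : k < p + m) (hk : k < p) :
    Fin.append pre b ⟨k, h⟩ = pre ⟨k, hk⟩ := by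
  have : (⟨k, h⟩ : Fin (p + m)) = Fin.castAdd m ⟨k, hk⟩ := rfl
  rw [this, Fin.append_left]

lemma fin_append_snoc_mk {S : Type*} {p m : ℕ} (pre : Fin p → S) (b : Fin m → S)
    (x : S) (k : ℕ) (h : k < p + m) (h' : k < p + (m + 1)) :
    Fin.append pre (Fin.snoc b x) ⟨k, h'⟩ = Fin.append pre b ⟨k, h⟩ := by
  rcases lt_or_ge k p with hk | hk
  · rw [fin_append_mk_left _ _ _ _ hk, fin_append_mk_left _ _ _ _ hk]
  · have h1 : (⟨k, h⟩ : Fin (p + m)) = Fin.natAdd p ⟨k - p, by omega⟩ := by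
      ext; simp; omega
    have h2 : (⟨k, h'⟩ : Fin (p + (m + 1))) = Fin.natAdd p ⟨k - p, by omega⟩ := by
      ext; simp; omega
    rw [h1, h2, Fin.append_right, Fin.append_right]
    have h3 : (⟨k - p, by omega⟩ : Fin (m + 1)) =
        Fin.castSucc ⟨k - p, by omega⟩ := rfl
    rw [h3, Fin.snoc_castSucc]

/-- for a SIMTP order-p Markov chain, the average over the
conditioning prefix of the maximal conditional block probability equals the
global maximum of the conditional block probability over prefix and block. -/
theorem simtp_avg_max_eq_global_max {S : Type*} [Fintype S] [Nonempty S]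
    (p n : ℕ)
    (T : (Fin p → S) → S → ℝ) (μ : (Fin p → S) → ℝ)
    (hT0 : ∀ pre x, 0 ≤ T pre x) (hT1 : ∀ pre, ∑ x, T pre x = 1)
    (hSIMTP : ∀ pre pre' : Fin p → S, fmax (T pre) = fmax (T pre'))
    (hμ0 : ∀ pre, 0 ≤ μ pre) (hμ1 : ∑ pre, μ pre = 1) :
    ∑ pre, μ pre * fmax (blockCond p n T pre) =
      fmax (fun pb : (Fin p → S) × (Fin (n + 1) → S) =>
        blockCond p n T pb.1 pb.2) := by
  classical
  set M : ℝ := fmax (T (Classical.arbitrary _)) with hMdef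
  have hM : ∀ pre, fmax (T pre) = M := fun pre => hSIMTP pre _
  have hM0 : 0 ≤ M := by
    rw [← hM (Classical.arbitrary _)]
    exact le_trans (hT0 _ (Classical.arbitrary _)) (le_fmax _ _)
  -- pointwise upper bound
  have hle : ∀ (m : ℕ) (pre : Fin p → S) (b : Fin (m + 1) → S),
      blockCond p m T pre b ≤ M ^ (m + 1) := by
    intro m pre b
    unfold blockCond
    calc ∏ i : Fin (m + 1), T (fun j : Fin p =>
          Fin.append pre b ⟨i.1 + j.1, by have := i.isLt; have := j.isLt; omega⟩) (b i)
        ≤ ∏ _i : Fin (m + 1), M := by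
          apply Finset.prod_le_prod
          · intro i _; exact hT0 _ _
          · intro i _
            exact le_trans (le_fmax _ _) (le_of_eq (hM _))
      _ = M ^ (m + 1) := by
          rw [Finset.prod_const, Finset.card_univ, Fintype.card_fin]
  -- attainment
  have hex : ∀ (m : ℕ) (pre : Fin p → S),
      ∃ b : Fin (m + 1) → S, blockCond p m T pre b = M ^ (m + 1) := by
    intro m
    induction m with
    | zero =>
      intro pre
      obtain ⟨x, hx⟩ := exists_fmax (T pre)
      refine ⟨fun _ => x, ?_⟩
      unfold blockCond
      rw [Fin.prod_univ_one]
      have hctx : T (fun j : Fin p => Fin.append pre (fun _ : Fin 1 => x)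
          ⟨((0 : Fin 1) : ℕ) + j.1, by have := j.isLt; omega⟩) x = T pre x := by
        congr 1
        funext j
        rw [fin_append_mk_left pre _ _ _ (by have := j.isLt; omega)]
        congr 1
        ext
        simp
      rw [hctx, ← hx, hM pre, pow_one]
    | succ m ih =>
      intro pre
      obtain ⟨b, hb⟩ := ih pre
      set c : Fin p → S := fun j => Fin.append pre b ⟨m + 1 + j.1, by omega⟩ with hc
      obtain ⟨x, hx⟩ := exists_fmax (T c)
      refine ⟨Fin.snoc b x, ?_⟩
      unfold blockCond
      rw [Fin.prod_univ_castSucc]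
      have h2 : blockCond p m T pre b * M = M ^ (m + 1 + 1) := by
        rw [hb]; ring
      rw [← h2]
      congr 1
      · unfold blockCond
        apply Finset.prod_congr rfl
        intro i _
        rw [Fin.snoc_castSucc]
        congr 1
        funext j
        simp only [Fin.coe_castSucc]
        exact fin_append_snoc_mk pre b x _ (by have := i.isLt; have := j.isLt; omega) _
      · rw [Fin.snoc_last]
        have hctx : (fun j : Fin p => Fin.append pre (Fin.snoc b x)
            ⟨((Fin.last (m + 1) : Fin (m + 2)) : ℕ) + j.1, by have := j.isLt; omega⟩) = c := by
          funext j
          simp only [Fin.val_last, hc]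
          exact fin_append_snoc_mk pre b x _ (by have := j.isLt; omega) _
        rw [hctx, ← hx, hM]
  have hfm : ∀ pre, fmax (blockCond p n T pre) = M ^ (n + 1) := by
    intro pre
    apply le_antisymm
    · exact Finset.sup'_le _ _ fun b _ => hle n pre b
    · obtain ⟨b, hb⟩ := hex n pre
      rw [← hb]
      exact le_fmax _ b
  have hrhs : fmax (fun pb : (Fin p → S) × (Fin (n + 1) → S) =>
      blockCond p n T pb.1 pb.2) = M ^ (n + 1) := by
    apply le_antisymm
    · exact Finset.sup'_le _ _ fun pb _ => hle n pb.1 pb.2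
    · obtain ⟨b, hb⟩ := hex n (Classical.arbitrary _)
      rw [← hb]
      exact le_fmax (fun pb : (Fin p → S) × (Fin (n + 1) → S) => blockCond p n T pb.1 pb.2) (Classical.arbitrary _, b)
  rw [hrhs]
  calc ∑ pre, μ pre * fmax (blockCond p n T pre)
      = ∑ pre, μ pre * M ^ (n + 1) := by
        exact Finset.sum_congr rfl fun pre _ => by rw [hfm pre]
    _ = (∑ pre, μ pre) * M ^ (n + 1) := by rw [Finset.sum_mul]
    _ = M ^ (n + 1) := by rw [hμ1, one_mul]
end

section
/- Any order-p SIMTP Markov chain satisfies the min-entropy chain-rule decomposition: H∞(X_t,...,X_{t+n}) = H∞(X_t,...,X_{t+p-1}) + H∞(X_{t+p},...,X_{t+n} | X_{t+p-1},...,X_t), i.e., the maximum of the joint block probability factors as the product of the maximum of the first p coordinates' joint probability and the maximum of the conditional probability of the remaining coordinates. -/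
open Real

lemma fmax_le {α : Type*} [Fintype α] [Nonempty α] {f : α → ℝ} {r : ℝ}
    (h : ∀ a, f a ≤ r) : fmax f ≤ r := Finset.sup'_le _ _ fun a _ => h a

noncomputable def argmaxS {α : Type*} [Fintype α] [Nonempty α] (f : α → ℝ) : α :=
  (Finset.exists_mem_eq_sup' Finset.univ_nonempty f).choose

lemma argmaxS_spec {α : Type*} [Fintype α] [Nonempty α] (f : α → ℝ) :
    f (argmaxS f) = fmax f :=
  ((Finset.exists_mem_eq_sup' Finset.univ_nonempty f).choose_spec.2).symm

/-- Greedy sequence that maximizes each transition. -/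
noncomputable def seq {S : Type*} [Fintype S] [Nonempty S] (p : ℕ)
    (T : (Fin p → S) → S → ℝ) (pre : Fin p → S) : ℕ → S
  | i => argmaxS (T (fun j : Fin p =>
      if h : i + j.1 < p then pre ⟨i + j.1, h⟩ else
        have : i + j.1 - p < i := by have := j.isLt; omega
        seq p T pre (i + j.1 - p)))
termination_by i => i

/-- min-entropy chain rule for SIMTP order-p Markov chains.
The block `(X_t,...,X_{t+n})` (here of length `p + (m+1)`) is split into its
first `p` coordinates, with joint distribution `μ`, and the remaining `m+1`
coordinates, whose conditional probability given the first `p` is the Markov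
factorization `blockCond`.  Then
`H∞(block) = H∞(first p coords) + H∞(rest | first p coords)`. -/
theorem simtp_minEntropy_chain_rule {S : Type*} [Fintype S] [Nonempty S]
    (p m : ℕ)
    (T : (Fin p → S) → S → ℝ) (μ : (Fin p → S) → ℝ)
    (J : (Fin (p + (m + 1)) → S) → ℝ)
    (hT0 : ∀ pre x, 0 ≤ T pre x) (hT1 : ∀ pre, ∑ x, T pre x = 1)
    (hSIMTP : ∀ pre pre' : Fin p → S, fmax (T pre) = fmax (T pre'))
    (hμ0 : ∀ a, 0 ≤ μ a) (hμ1 : ∑ a, μ a = 1)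
    (hJ : ∀ (a : Fin p → S) (b : Fin (m + 1) → S),
      J (Fin.append a b) = μ a * blockCond p m T a b) :
    -Real.logb 2 (fmax J) =
      -Real.logb 2 (fmax μ) +
        -Real.logb 2 (fmax (fun ab : (Fin p → S) × (Fin (m + 1) → S) =>
          blockCond p m T ab.1 ab.2)) := by
  classical
  set pre₀ : Fin p → S := fun _ => Classical.arbitrary S with hpre₀
  set c : ℝ := fmax (T pre₀) with hc
  -- c is positive
  have hcpos : 0 < c := by
    by_contra h
    push_neg at h
    have h2 : (∑ x, T pre₀ x) ≤ ∑ _x : S, (0:ℝ) :=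
      Finset.sum_le_sum fun x _ => le_trans (le_fmax (T pre₀) x) h
    rw [hT1] at h2; simp at h2; linarith
  -- fmax μ positive
  have hμpos : 0 < fmax μ := by
    by_contra h
    push_neg at h
    have h2 : (∑ a, μ a) ≤ ∑ _a : Fin p → S, (0:ℝ) :=
      Finset.sum_le_sum fun a _ => le_trans (le_fmax μ a) h
    rw [hμ1] at h2; simp at h2; linarith
  -- every blockCond factor is ≤ c; blockCond ≥ 0
  have hbc0 : ∀ (a : Fin p → S) (b : Fin (m+1) → S), 0 ≤ blockCond p m T a b := by
    intro a b
    exact Finset.prod_nonneg fun i _ => hT0 _ _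
  have hbc_le : ∀ (a : Fin p → S) (b : Fin (m+1) → S),
      blockCond p m T a b ≤ c ^ (m+1) := by
    intro a b
    unfold blockCond
    calc ∏ i : Fin (m+1), T (fun j : Fin p =>
          Fin.append a b ⟨i.1 + j.1, by have := i.isLt; have := j.isLt; omega⟩) (b i)
        ≤ ∏ _i : Fin (m+1), c := by
          apply Finset.prod_le_prod (fun i _ => hT0 _ _)
          intro i _
          refine le_trans (le_fmax _ (b i)) ?_
          rw [hSIMTP _ pre₀]
      _ = c ^ (m+1) := by simp
  -- the greedy b achieves c^(m+1)
  have hbc_eq : ∀ a : Fin p → S,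
      blockCond p m T a (fun i : Fin (m+1) => seq p T a i.1) = c ^ (m+1) := by
    intro a
    set b : Fin (m+1) → S := fun i : Fin (m+1) => seq p T a i.1 with hb
    have hwin : ∀ i : Fin (m+1),
        (fun j : Fin p => Fin.append a b
            ⟨i.1 + j.1, by have := i.isLt; have := j.isLt; omega⟩)
        = (fun j : Fin p => if h : i.1 + j.1 < p then a ⟨i.1 + j.1, h⟩
            else seq p T a (i.1 + j.1 - p)) := by
      intro i
      funext j
      by_cases h : i.1 + j.1 < p
      · have he : (⟨i.1 + j.1, by have := i.isLt; have := j.isLt; omega⟩ :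
            Fin (p + (m+1))) = Fin.castAdd (m+1) ⟨i.1 + j.1, h⟩ := rfl
        rw [he, Fin.append_left]
        simp [h]
      · have he : (⟨i.1 + j.1, by have := i.isLt; have := j.isLt; omega⟩ :
            Fin (p + (m+1))) = Fin.natAdd p ⟨i.1 + j.1 - p, by
              have := i.isLt; have := j.isLt; omega⟩ := by
          apply Fin.ext; simp; omega
        rw [he, Fin.append_right]
        simp [h, hb]
    unfold blockCond
    have : ∀ i : Fin (m+1), T (fun j : Fin p => Fin.append a b
        ⟨i.1 + j.1, by have := i.isLt; have := j.isLt; omega⟩) (b i) = c := by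
      intro i
      rw [hwin i]
      have hbeq : b i = argmaxS (T (fun j : Fin p =>
          if h : i.1 + j.1 < p then a ⟨i.1 + j.1, h⟩
          else seq p T a (i.1 + j.1 - p))) := by
        simp only [hb]; rw [seq.eq_def]
      rw [hbeq, argmaxS_spec (T (fun j : Fin p =>
          if h : i.1 + j.1 < p then a ⟨i.1 + j.1, h⟩
          else seq p T a (i.1 + j.1 - p)))]
      exact hSIMTP _ pre₀
    rw [Finset.prod_congr rfl (fun i _ => this i)]
    simp
  -- fmax of blockCond pairs
  have hfbc : fmax (fun ab : (Fin p → S) × (Fin (m + 1) → S) =>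
      blockCond p m T ab.1 ab.2) = c ^ (m+1) := by
    apply le_antisymm
    · exact fmax_le fun ab => hbc_le ab.1 ab.2
    · have := le_fmax (fun ab : (Fin p → S) × (Fin (m + 1) → S) =>
        blockCond p m T ab.1 ab.2) (pre₀, fun i : Fin (m+1) => seq p T pre₀ i.1)
      rw [hbc_eq pre₀] at this
      exact this
  -- fmax J
  have hfJ : fmax J = fmax μ * c ^ (m+1) := by
    apply le_antisymm
    · apply fmax_le
      intro x
      have hx : x = Fin.append (fun i => x (Fin.castAdd (m+1) i))
          (fun i => x (Fin.natAdd p i)) := Fin.append_castAdd_natAdd.symm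
      rw [hx, hJ]
      have h1 : μ (fun i => x (Fin.castAdd (m+1) i)) ≤ fmax μ := le_fmax _ _
      have h2 := hbc_le (fun i => x (Fin.castAdd (m+1) i)) (fun i => x (Fin.natAdd p i))
      exact mul_le_mul h1 h2 (hbc0 _ _) (le_of_lt hμpos)
    · set a₀ := argmaxS μ with ha₀
      have := le_fmax J (Fin.append a₀ (fun i : Fin (m+1) => seq p T a₀ i.1))
      rw [hJ, hbc_eq a₀, ha₀, argmaxS_spec μ] at this
      exact this
  rw [hfJ, hfbc]
  rw [Real.logb_mul (ne_of_gt hμpos) (ne_of_gt (pow_pos hcpos _))]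
  ring
end
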